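/- If there exists a continuum which has surjective span zero and is not chainable, then there exists a metrizable continuum which has surjective span zero and is not chainable. -/

import Mathlib

/-- A continuum `X` is chainable if every finite open cover has a finite open
refinement that can be enumerated as `V_0, …, V_{n-1}` with
`V_i ∩ V_j ≠ ∅` iff `|i - j| ≤ 1`. -/
def Chainable (X : Type*) [TopologicalSpace X] : Prop :=
  ∀ U : Finset (Set X), (∀ u ∈ U, IsOpen u) → ⋃₀ (U : Set (Set X)) = Set.univ →
    ∃ (n : ℕ) (V : Fin n → Set X),
      (∀ i, IsOpen (V i)) ∧ (⋃ i, V i) = Set.univ ∧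
      (∀ i, ∃ u ∈ U, V i ⊆ u) ∧
      ∀ i j : Fin n, (V i ∩ V j).Nonempty ↔ |((i : ℕ) : ℤ) - ((j : ℕ) : ℤ)| ≤ 1

/-- A continuum has surjective span zero if every subcontinuum `Z` of `X × X` with
`π₁[Z] = π₂[Z] = X` meets the diagonal. -/
def SurjectiveSpanZero (X : Type*) [TopologicalSpace X] : Prop :=
  ∀ Z : Set (X × X), IsClosed Z → IsConnected Z →
    Prod.fst '' Z = Set.univ → Prod.snd '' Z = Set.univ → ∃ x : X, (x, x) ∈ Z

/-!
Surjective span zero of a compact Hausdorff space is a statement about finitely many finite open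
covers at a time: `X` has it iff for every finite open cover `U₀` there is a finite open cover `N`
fine enough that no "span pattern" at scale `N` (a chain-connected family of rectangles projecting
onto both factors and missing the `U₀`-neighbourhood of the diagonal) exists. Patterns are read off
a subcontinuum missing the diagonal; conversely, a Kuratowski limit of patterns on ever finer
covers, taken along an ultrafilter, is such a subcontinuum. Non-chainability is likewise witnessed
by a single finite open cover.

Countably many continuous real functions suffice to see all this. Index functions by codes
`(B, j)` with `B` a finite list of rational boxes, and let the function with code `(B, j)` be the
`j`-th member of a partition of unity subordinate to `N W ⊼ U`, where `W` is the cover cut out by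
the boxes `B` in earlier functions, `N W` is pattern-free for `W`, and `U` is the non-chainable
cover. The image of `X` in `ℝ^ℕ` is a metrizable continuum; every open cover of it is refined by a
box cover `W`, and `N W ⊼ U` is refined by the preimage of a cover of the image, so
pattern-freeness and the failure of chainability both descend to the image.
-/

open Set Filter Topology
open scoped FinsetFamily Classical

noncomputable section

namespace SpanZero

variable {X Y : Type*}

def Refines (V U : Finset (Set X)) : Prop := ∀ v ∈ V, ∃ u ∈ U, v ⊆ u

theorem Refines.refl (U : Finset (Set X)) : Refines U U := fun u hu => ⟨u, hu, subset_rfl⟩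

theorem Refines.trans {U V W : Finset (Set X)} (hUV : Refines U V) (hVW : Refines V W) :
    Refines U W := fun u hu =>
  let ⟨v, hv, huv⟩ := hUV u hu
  let ⟨w, hw, hvw⟩ := hVW v hv
  ⟨w, hw, huv.trans hvw⟩

theorem infs_refines_left (U V : Finset (Set X)) : Refines (U ⊼ V) U := by
  simp only [Refines, Finset.mem_infs]
  rintro _ ⟨u, hu, v, -, rfl⟩
  exact ⟨u, hu, inter_subset_left⟩

theorem infs_refines_right (U V : Finset (Set X)) : Refines (U ⊼ V) V := by
  simp only [Refines, Finset.mem_infs]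
  rintro _ ⟨-, -, v, hv, rfl⟩
  exact ⟨v, hv, inter_subset_right⟩

def pullback (f : X → Y) (U : Finset (Set Y)) : Finset (Set X) := U.image (f ⁻¹' ·)

def ChainConnected {ι α : Type*} (t : Set ι) (e : ι → Set α) : Prop :=
  ∀ i ∈ t, ∀ j ∈ t, Relation.ReflTransGen (fun i j => (e i ∩ e j).Nonempty ∧ i ∈ t) i j

theorem ChainConnected.biUnion_subset_or {ι α : Type*} {t : Set ι} {e : ι → Set α}
    (ht : ChainConnected t e) {A B : Set α} (hAB : Disjoint A B)
    (h : ∀ i ∈ t, e i ⊆ A ∨ e i ⊆ B) : (⋃ i ∈ t, e i) ⊆ A ∨ (⋃ i ∈ t, e i) ⊆ B := by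
  rcases t.eq_empty_or_nonempty with rfl | ⟨i₀, hi₀⟩
  · simp
  have hlink : ∀ i ∈ t, ∀ j ∈ t, (e i ∩ e j).Nonempty → e i ⊆ A → e j ⊆ A := by
    rintro i hi j hj ⟨z, hzi, hzj⟩ hiA
    exact (h j hj).resolve_right fun hjB => Set.disjoint_left.1 hAB (hiA hzi) (hjB hzj)
  have hprop : ∀ i ∈ t, ∀ j ∈ t, e i ⊆ A → e j ⊆ A := by
    intro i hi j hj hiA
    induction ht i hi j hj with
    | refl => exact hiA
    | tail _ hbc ih => exact hlink _ hbc.2 _ hj hbc.1 (ih hbc.2)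
  by_cases hi₀A : e i₀ ⊆ A
  · exact .inl (iUnion₂_subset fun j hj => hprop i₀ hi₀ j hj hi₀A)
  · exact .inr (iUnion₂_subset fun j hj =>
      (h j hj).resolve_left fun hjA => hi₀A (hprop j hj i₀ hi₀ hjA))

/-- A combinatorial model, at the scale of the cover `N`, of a continuum in `X × X` that projects
onto both factors and misses the neighbourhood `⋃ w ∈ U₀, w ×ˢ w` of the diagonal: a chain-connected
finite family of rectangles `p.1 ×ˢ p.2` whose sides lie in members of `N`. -/
structure IsSpanPattern (U₀ N : Finset (Set X)) (S : Finset (Set X × Set X)) : Prop where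
  fst_refines : ∀ p ∈ S, ∃ n ∈ N, p.1 ⊆ n
  snd_refines : ∀ p ∈ S, ∃ n ∈ N, p.2 ⊆ n
  exists_fst : ∀ x, ∃ y, ∃ p ∈ S, (x, y) ∈ p.1 ×ˢ p.2
  exists_snd : ∀ y, ∃ x, ∃ p ∈ S, (x, y) ∈ p.1 ×ˢ p.2
  disjoint : ∀ p ∈ S, ∀ w ∈ U₀, Disjoint (p.1 ×ˢ p.2) (w ×ˢ w)
  chainConnected : ChainConnected (S : Set (Set X × Set X)) fun p => p.1 ×ˢ p.2

def IsPatternFree (U₀ N : Finset (Set X)) : Prop := ∀ S, ¬IsSpanPattern U₀ N S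

theorem IsSpanPattern.mono {U₀ U₁ N N' : Finset (Set X)} {S : Finset (Set X × Set X)}
    (hS : IsSpanPattern U₀ N S) (hU : Refines U₁ U₀) (hN : Refines N N') :
    IsSpanPattern U₁ N' S where
  fst_refines p hp := let ⟨n, hn, hpn⟩ := hS.fst_refines p hp
    let ⟨n', hn', hnn'⟩ := hN n hn; ⟨n', hn', hpn.trans hnn'⟩
  snd_refines p hp := let ⟨n, hn, hpn⟩ := hS.snd_refines p hp
    let ⟨n', hn', hnn'⟩ := hN n hn; ⟨n', hn', hpn.trans hnn'⟩
  exists_fst := hS.exists_fst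
  exists_snd := hS.exists_snd
  disjoint p hp w hw := let ⟨w', hw', hww'⟩ := hU w hw
    (hS.disjoint p hp w' hw').mono_right (prod_mono hww' hww')
  chainConnected := hS.chainConnected

theorem IsPatternFree.mono {U₀ U₁ N N' : Finset (Set X)} (h : IsPatternFree U₁ N')
    (hU : Refines U₁ U₀) (hN : Refines N N') : IsPatternFree U₀ N :=
  fun S hS => h S (hS.mono hU hN)

theorem IsSpanPattern.pullback {f : X → Y} (hf : Function.Surjective f) {U₀ N : Finset (Set Y)}
    {S : Finset (Set Y × Set Y)} (hS : IsSpanPattern U₀ N S) :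
    IsSpanPattern (pullback f U₀) (pullback f N) (S.image (Prod.map (f ⁻¹' ·) (f ⁻¹' ·))) where
  fst_refines := by
    simp only [Finset.mem_image]
    rintro _ ⟨p, hp, rfl⟩
    obtain ⟨n, hn, hpn⟩ := hS.fst_refines p hp
    exact ⟨f ⁻¹' n, Finset.mem_image_of_mem _ hn, preimage_mono hpn⟩
  snd_refines := by
    simp only [Finset.mem_image]
    rintro _ ⟨p, hp, rfl⟩
    obtain ⟨n, hn, hpn⟩ := hS.snd_refines p hp
    exact ⟨f ⁻¹' n, Finset.mem_image_of_mem _ hn, preimage_mono hpn⟩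
  exists_fst x := by
    obtain ⟨y, p, hp, hxy⟩ := hS.exists_fst (f x)
    obtain ⟨y, rfl⟩ := hf y
    exact ⟨y, _, Finset.mem_image_of_mem _ hp, hxy⟩
  exists_snd y := by
    obtain ⟨x, p, hp, hxy⟩ := hS.exists_snd (f y)
    obtain ⟨x, rfl⟩ := hf x
    exact ⟨x, _, Finset.mem_image_of_mem _ hp, hxy⟩
  disjoint := by
    simp only [Finset.mem_image, SpanZero.pullback]
    rintro _ ⟨p, hp, rfl⟩ _ ⟨w, hw, rfl⟩
    simpa only [Prod.map, preimage_prod_map_prod] using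
      (hS.disjoint p hp w hw).preimage (Prod.map f f)
  chainConnected := by
    simp only [Finset.coe_image, ChainConnected, forall_mem_image]
    intro p hp q hq
    refine Relation.ReflTransGen.lift (Prod.map (f ⁻¹' ·) (f ⁻¹' ·))
      (fun a b ⟨⟨z, hza, hzb⟩, ha⟩ => ⟨?_, mem_image_of_mem _ ha⟩) _ _ (hS.chainConnected p hp q hq)
    obtain ⟨z, rfl⟩ := (hf.prodMap hf) z
    exact ⟨z, hza, hzb⟩

theorem IsPatternFree.of_pullback {f : X → Y} (hf : Function.Surjective f) {U₀ N : Finset (Set Y)}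
    (h : IsPatternFree (pullback f U₀) (pullback f N)) : IsPatternFree U₀ N :=
  fun _ hS => h _ (hS.pullback hf)

variable [TopologicalSpace X] [TopologicalSpace Y]

structure IsOpenCover (U : Finset (Set X)) : Prop where
  isOpen : ∀ u ∈ U, IsOpen u
  covers : ∀ x, ∃ u ∈ U, x ∈ u

theorem isOpenCover_iff_sUnion_eq {U : Finset (Set X)} :
    IsOpenCover U ↔ (∀ u ∈ U, IsOpen u) ∧ ⋃₀ (U : Set (Set X)) = univ := by
  simp only [sUnion_eq_univ_iff, Finset.mem_coe]
  exact ⟨fun h => ⟨h.isOpen, h.covers⟩, fun h => ⟨h.1, h.2⟩⟩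

theorem isOpenCover_singleton_univ : IsOpenCover ({univ} : Finset (Set X)) :=
  ⟨by simp, fun _ => ⟨univ, by simp⟩⟩

theorem IsOpenCover.infs {U V : Finset (Set X)} (hU : IsOpenCover U) (hV : IsOpenCover V) :
    IsOpenCover (U ⊼ V) where
  isOpen := by
    simp only [Finset.mem_infs]
    rintro _ ⟨u, hu, v, hv, rfl⟩
    exact (hU.isOpen u hu).inter (hV.isOpen v hv)
  covers x := by
    obtain ⟨u, hu, hxu⟩ := hU.covers x
    obtain ⟨v, hv, hxv⟩ := hV.covers x
    exact ⟨u ⊓ v, Finset.mem_infs.2 ⟨u, hu, v, hv, rfl⟩, hxu, hxv⟩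

theorem IsOpenCover.pullback {f : X → Y} {U : Finset (Set Y)} (hU : IsOpenCover U)
    (hf : Continuous f) : IsOpenCover (pullback f U) where
  isOpen := by
    simp only [SpanZero.pullback, Finset.mem_image]
    rintro _ ⟨u, hu, rfl⟩
    exact (hU.isOpen u hu).preimage hf
  covers x :=
    let ⟨u, hu, hxu⟩ := hU.covers (f x)
    ⟨f ⁻¹' u, Finset.mem_image_of_mem _ hu, hxu⟩

theorem exists_finset_isOpenCover_image [CompactSpace X] {ι : Type*} {s : ι → Set X}
    (hs : ∀ i, IsOpen (s i)) {P : ι → Prop} (h : ∀ x, ∃ i, x ∈ s i ∧ P i) :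
    ∃ I : Finset ι, IsOpenCover (I.image s) ∧ ∀ i ∈ I, P i := by
  choose i hxi hPi using h
  obtain ⟨t, ht⟩ := isCompact_univ.elim_finite_subcover (s ∘ i) (fun x => hs _)
    fun x _ => mem_iUnion.2 ⟨x, hxi x⟩
  refine ⟨t.image i, ⟨?_, fun x => ?_⟩, ?_⟩
  · simp only [Finset.mem_image]
    rintro _ ⟨_, -, rfl⟩
    exact hs _
  · obtain ⟨y, hy, hxy⟩ := mem_iUnion₂.1 (ht (mem_univ x))
    exact ⟨s (i y), Finset.mem_image_of_mem _ (Finset.mem_image_of_mem _ hy), hxy⟩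
  · simp only [Finset.mem_image]
    rintro _ ⟨y, -, rfl⟩
    exact hPi y

/-- Each point `x` has the open neighbourhood `⋂ {s ∈ σ | x ∈ s}`, and there are only finitely
many of these. -/
theorem exists_isOpenCover_subset_of_mem (σ : Finset (Set X)) (hσ : ∀ s ∈ σ, IsOpen s) :
    ∃ W : Finset (Set X), IsOpenCover W ∧ ∀ w ∈ W, ∃ x ∈ w, ∀ s ∈ σ, x ∈ s → w ⊆ s := by
  set star : X → Set X := fun x => ⋂ s ∈ σ.filter (x ∈ ·), s
  have hmem : ∀ x, x ∈ star x := fun x => mem_iInter₂.2 fun s hs => (Finset.mem_filter.1 hs).2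
  have hfin : (range star).Finite := by
    refine ((σ.powerset.image fun A => ⋂ s ∈ A, s).finite_toSet).subset ?_
    rintro _ ⟨x, rfl⟩
    exact Finset.mem_image.2 ⟨_, Finset.mem_powerset.2 (Finset.filter_subset _ _), rfl⟩
  refine ⟨hfin.toFinset, ⟨?_, fun x => ⟨star x, by simp, hmem x⟩⟩, ?_⟩ <;>
    simp only [Set.Finite.mem_toFinset, forall_mem_range]
  · exact fun x => isOpen_biInter_finset fun s hs => hσ s (Finset.mem_filter.1 hs).1
  · exact fun x => ⟨x, hmem x, fun s hs hxs =>
      biInter_subset_of_mem (Finset.mem_filter.2 ⟨hs, hxs⟩)⟩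

theorem exists_isOpenCover_prod_subset [CompactSpace X] {O : Finset (Set (X × X))}
    (hO : IsOpenCover O) :
    ∃ W : Finset (Set X), IsOpenCover W ∧ ∀ w ∈ W, ∀ w' ∈ W, ∃ o ∈ O, w ×ˢ w' ⊆ o := by
  have hrect : ∀ z : X × X, ∃ r : Set X × Set X, IsOpen r.1 ∧ IsOpen r.2 ∧ z ∈ r.1 ×ˢ r.2 ∧
      ∃ o ∈ O, r.1 ×ˢ r.2 ⊆ o := by
    intro z
    obtain ⟨o, ho, hzo⟩ := hO.covers z
    obtain ⟨u, v, hu, hv, hzu, hzv, huv⟩ := isOpen_prod_iff.1 (hO.isOpen o ho) z.1 z.2 hzo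
    exact ⟨(u, v), hu, hv, ⟨hzu, hzv⟩, o, ho, huv⟩
  choose r hr₁ hr₂ hzr hro using hrect
  obtain ⟨t, ht⟩ := isCompact_univ.elim_finite_subcover (fun z => (r z).1 ×ˢ (r z).2)
    (fun z => (hr₁ z).prod (hr₂ z)) fun z _ => mem_iUnion.2 ⟨z, hzr z⟩
  obtain ⟨W, hW, hWσ⟩ := exists_isOpenCover_subset_of_mem
    (t.image (fun z => (r z).1) ∪ t.image (fun z => (r z).2)) (by
      simp only [Finset.mem_union, Finset.mem_image]
      rintro _ (⟨z, -, rfl⟩ | ⟨z, -, rfl⟩)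
      exacts [hr₁ z, hr₂ z])
  refine ⟨W, hW, fun w hw w' hw' => ?_⟩
  obtain ⟨x, hxw, hw⟩ := hWσ w hw
  obtain ⟨x', hxw', hw'⟩ := hWσ w' hw'
  obtain ⟨z, hzt, hx, hx'⟩ := mem_iUnion₂.1 (ht (mem_univ (x, x')))
  obtain ⟨o, ho, hro⟩ := hro z
  exact ⟨o, ho, (prod_mono (hw _ (Finset.mem_union_left _ (Finset.mem_image_of_mem _ hzt)) hx)
    (hw' _ (Finset.mem_union_right _ (Finset.mem_image_of_mem _ hzt)) hx')).trans hro⟩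

theorem _root_.IsPreconnected.chainConnected {ι α : Type*} [TopologicalSpace α] {s : Set α}
    (hs : IsPreconnected s) {t : Set ι} {e : ι → Set α} (he : ∀ i ∈ t, IsOpen (e i))
    (hst : s ⊆ ⋃ i ∈ t, e i) (hmeet : ∀ i ∈ t, (s ∩ e i).Nonempty) : ChainConnected t e := by
  set R := fun i j => (e i ∩ e j).Nonempty ∧ i ∈ t
  set P : α → α → Prop := fun x y =>
    ∀ i ∈ t, x ∈ e i → ∀ j ∈ t, y ∈ e j → Relation.ReflTransGen R i j
  have hP : ∀ x ∈ s, ∀ y ∈ s, P x y := by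
    refine fun x hx y hy => hs.induction₂' P (fun x hx => ?_) (fun x y z _ hy _ hxy hyz => ?_) hx hy
    · obtain ⟨i₀, hi₀, hxi₀⟩ := mem_iUnion₂.1 (hst hx)
      filter_upwards [mem_nhdsWithin_of_mem_nhds ((he i₀ hi₀).mem_nhds hxi₀)] with y hyi₀
      exact ⟨fun i hi hxi j _ hyj => .tail (.single ⟨⟨x, hxi, hxi₀⟩, hi⟩) ⟨⟨y, hyi₀, hyj⟩, hi₀⟩,
        fun i hi hyi j _ hxj => .tail (.single ⟨⟨y, hyi, hyi₀⟩, hi⟩) ⟨⟨x, hxi₀, hxj⟩, hi₀⟩⟩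
    · intro i hi hxi k hk hzk
      obtain ⟨j, hj, hyj⟩ := mem_iUnion₂.1 (hst hy)
      exact (hxy i hi hxi j hj hyj).trans (hyz j hj hyj k hk hzk)
  intro i hi j hj
  obtain ⟨x, hxs, hxi⟩ := hmeet i hi
  obtain ⟨y, hys, hyj⟩ := hmeet j hj
  exact hP x hxs y hys i hi hxi j hj hyj

theorem exists_isOpenCover_closure_prod_disjoint [CompactSpace X] [T2Space X] {Z : Set (X × X)}
    (hZ : IsClosed Z) (hdiag : ∀ x, (x, x) ∉ Z) :
    ∃ U₀ : Finset (Set X), IsOpenCover U₀ ∧ ∀ w ∈ U₀, Disjoint (closure w ×ˢ closure w) Z := by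
  have hnhds : ∀ x, ∃ w, IsOpen w ∧ x ∈ w ∧ Disjoint (closure w ×ˢ closure w) Z := by
    intro x
    have hZx : Zᶜ ∈ 𝓝 x ×ˢ 𝓝 x := nhds_prod_eq (x := x) (y := x) ▸
      hZ.isOpen_compl.mem_nhds (hdiag x)
    obtain ⟨c, ⟨hcx, hc⟩, hcZ⟩ := (closed_nhds_basis x).prod_self.mem_iff.1 hZx
    have hcl : closure (interior c) ⊆ c := closure_minimal interior_subset hc
    exact ⟨interior c, isOpen_interior, mem_interior_iff_mem_nhds.2 hcx,
      subset_compl_iff_disjoint_right.1 ((prod_mono hcl hcl).trans hcZ)⟩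
  choose w hw hxw hwZ using hnhds
  obtain ⟨I, hI, hIZ⟩ := exists_finset_isOpenCover_image hw fun x => ⟨x, hxw x, hwZ x⟩
  refine ⟨I.image w, hI, ?_⟩
  simp only [Finset.mem_image]
  rintro _ ⟨x, hx, rfl⟩
  exact hIZ x hx

theorem exists_isSpanPattern_of_subcontinuum [CompactSpace X] [T2Space X] {Z : Set (X × X)}
    (hZ : IsClosed Z) (hZc : IsPreconnected Z) (hfst : Prod.fst '' Z = univ)
    (hsnd : Prod.snd '' Z = univ) (hdiag : ∀ x, (x, x) ∉ Z) :
    ∃ U₀ : Finset (Set X), IsOpenCover U₀ ∧ ∀ N, IsOpenCover N → ∃ S, IsSpanPattern U₀ N S := by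
  obtain ⟨U₀, hU₀, hU₀Z⟩ := exists_isOpenCover_closure_prod_disjoint hZ hdiag
  set D := ⋃ w ∈ U₀, closure w ×ˢ closure w
  have hD : IsClosed D :=
    U₀.finite_toSet.isClosed_biUnion fun w _ => isClosed_closure.prod isClosed_closure
  have hDZ : Disjoint D Z := by simpa [D] using hU₀Z
  -- every rectangle from `W` meeting `Z` misses the closed neighbourhood `D` of the diagonal
  obtain ⟨W, hW, hWprod⟩ := exists_isOpenCover_prod_subset (O := {Zᶜ, Dᶜ})
    ⟨by simp [hZ.isOpen_compl, hD.isOpen_compl], fun z => by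
      by_cases hz : z ∈ Z
      · exact ⟨Dᶜ, by simp, Set.disjoint_right.1 hDZ hz⟩
      · exact ⟨Zᶜ, by simp, hz⟩⟩
  refine ⟨U₀, hU₀, fun N hN => ?_⟩
  have hV := hN.infs hW
  set S := ((N ⊼ W) ×ˢ (N ⊼ W)).filter fun p => (p.1 ×ˢ p.2 ∩ Z).Nonempty
  have hmemS : ∀ {p}, p ∈ S ↔ (p.1 ∈ N ⊼ W ∧ p.2 ∈ N ⊼ W) ∧ (p.1 ×ˢ p.2 ∩ Z).Nonempty := by
    simp [S]
  have hZS : ∀ z ∈ Z, ∃ p ∈ S, z ∈ p.1 ×ˢ p.2 := by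
    intro z hz
    obtain ⟨a, ha, hza⟩ := hV.covers z.1
    obtain ⟨b, hb, hzb⟩ := hV.covers z.2
    exact ⟨(a, b), hmemS.2 ⟨⟨ha, hb⟩, z, ⟨hza, hzb⟩, hz⟩, hza, hzb⟩
  refine ⟨S, ⟨fun p hp => infs_refines_left N W _ (hmemS.1 hp).1.1,
    fun p hp => infs_refines_left N W _ (hmemS.1 hp).1.2, fun x => ?_, fun y => ?_, ?_, ?_⟩⟩
  · obtain ⟨z, hz, rfl⟩ : x ∈ Prod.fst '' Z := hfst ▸ mem_univ x
    obtain ⟨p, hp, hzp⟩ := hZS z hz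
    exact ⟨z.2, p, hp, hzp⟩
  · obtain ⟨z, hz, rfl⟩ : y ∈ Prod.snd '' Z := hsnd ▸ mem_univ y
    obtain ⟨p, hp, hzp⟩ := hZS z hz
    exact ⟨z.1, p, hp, hzp⟩
  · intro p hp w hw
    obtain ⟨⟨hp₁, hp₂⟩, z, hzp, hzZ⟩ := hmemS.1 hp
    obtain ⟨a₁, ha₁, hpa₁⟩ := infs_refines_right N W _ hp₁
    obtain ⟨a₂, ha₂, hpa₂⟩ := infs_refines_right N W _ hp₂
    obtain ⟨o, ho, hao⟩ := hWprod a₁ ha₁ a₂ ha₂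
    have hpo := (prod_mono hpa₁ hpa₂).trans hao
    simp only [Finset.mem_insert, Finset.mem_singleton] at ho
    rcases ho with rfl | rfl
    · exact absurd hzZ (hpo hzp)
    · exact (subset_compl_iff_disjoint_right.1 hpo).mono_right
        ((Set.prod_mono subset_closure subset_closure).trans (subset_biUnion_of_mem (u := fun w =>
          closure w ×ˢ closure w) hw))
  · refine hZc.chainConnected (fun p hp => ?_)
      (fun z hz => let ⟨p, hp, hzp⟩ := hZS z hz; mem_biUnion hp hzp) fun p hp => ?_
    · obtain ⟨⟨hp₁, hp₂⟩, -⟩ := hmemS.1 hp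
      exact (hV.isOpen _ hp₁).prod (hV.isOpen _ hp₂)
    · obtain ⟨-, z, hzp, hzZ⟩ := hmemS.1 hp
      exact ⟨z, hzZ, hzp⟩

def kuratowskiLimsup {ι : Type*} (l : Filter ι) (K : ι → Set X) : Set X :=
  {z | ∀ u ∈ 𝓝 z, ∃ᶠ i in l, (K i ∩ u).Nonempty}

section kuratowskiLimsup

variable {ι : Type*} {l : Filter ι} {K : ι → Set X}

theorem isClosed_kuratowskiLimsup : IsClosed (kuratowskiLimsup l K) := by
  refine isOpen_compl_iff.1 (isOpen_iff_mem_nhds.2 fun z hz => ?_)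
  simp only [kuratowskiLimsup, mem_compl_iff, mem_ofPred_eq, not_forall] at hz
  obtain ⟨u, hu, hfreq⟩ := hz
  filter_upwards [eventually_mem_nhds_iff.2 hu] with z' hz' using fun h => hfreq (h u hz')

theorem kuratowskiLimsup_subset_closure {A : Set X} (h : ∀ᶠ i in l, K i ⊆ A) :
    kuratowskiLimsup l K ⊆ closure A := fun _ hz => mem_closure_iff_nhds.2 fun u hu =>
  let ⟨_, ⟨y, hyK, hyu⟩, hKA⟩ := ((hz u hu).and_eventually h).exists
  ⟨y, hyu, hKA hyK⟩

theorem exists_mem_kuratowskiLimsup [CompactSpace X] [l.NeBot] {C : Set X} (hC : IsClosed C)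
    (h : ∀ i, (K i ∩ C).Nonempty) : ∃ z ∈ C, z ∈ kuratowskiLimsup l K := by
  choose z hzK hzC using h
  obtain ⟨c, hcC, hc⟩ :=
    hC.isCompact.exists_clusterPt (f := map z l) (le_principal_iff.2 (mem_map.2 (univ_mem' hzC)))
  exact ⟨c, hcC, fun u hu =>
    (frequently_map.1 (hc.frequently (eventually_of_mem hu fun _ => id))).mono
      fun i hi => ⟨z i, hzK i, hi⟩⟩

theorem exists_isOpen_superset_eventually_disjoint {C : Set X} (hC : IsCompact C)
    (h : Disjoint C (kuratowskiLimsup l K)) :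
    ∃ O, IsOpen O ∧ C ⊆ O ∧ ∀ᶠ i in l, Disjoint (K i) O := by
  refine hC.induction_on ⟨∅, isOpen_empty, subset_rfl, by simp⟩
    (fun s t hst ⟨O, hO, htO, hKO⟩ => ⟨O, hO, hst.trans htO, hKO⟩)
    (fun s t ⟨O, hO, hsO, hKO⟩ ⟨O', hO', htO', hKO'⟩ => ⟨O ∪ O', hO.union hO',
      union_subset_union hsO htO', (hKO.and hKO').mono fun i hi => disjoint_union_right.2 hi⟩)
    fun x hx => ?_
  have hx' : x ∉ kuratowskiLimsup l K := Set.disjoint_left.1 h hx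
  simp only [kuratowskiLimsup, mem_ofPred_eq, not_forall, not_frequently] at hx'
  obtain ⟨u, hu, hKu⟩ := hx'
  exact ⟨interior u, mem_nhdsWithin_of_mem_nhds (interior_mem_nhds.2 hu), interior u,
    isOpen_interior, subset_rfl, hKu.mono fun i hi =>
      (disjoint_iff_inter_eq_empty.2 (not_nonempty_iff_eq_empty.1 hi)).mono_right interior_subset⟩

end kuratowskiLimsup

def OpenCover (X : Type*) [TopologicalSpace X] : Type _ := {U : Finset (Set X) // IsOpenCover U}

-- `U ≤ V` when `V` is finer, so that `atTop` is the filter of ever finer covers.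
instance : Preorder (OpenCover X) where
  le U V := Refines V.1 U.1
  le_refl U := Refines.refl U.1
  le_trans _ _ _ hUV hVW := hVW.trans hUV

instance : IsDirectedOrder (OpenCover X) where
  directed U V := ⟨⟨U.1 ⊼ V.1, U.2.infs V.2⟩, infs_refines_left _ _, infs_refines_right _ _⟩

instance : Nonempty (OpenCover X) := ⟨⟨{univ}, isOpenCover_singleton_univ⟩⟩

theorem isPreconnected_kuratowskiLimsup [CompactSpace X] [T2Space X] {ι : Type*}
    (𝔉 : Ultrafilter ι) {U₀ : Finset (Set X)} {S : ι → Finset (Set X × Set X)}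
    (hS : ∀ W, IsOpenCover W → ∀ᶠ i in (𝔉 : Filter ι), IsSpanPattern U₀ W (S i)) :
    IsPreconnected (kuratowskiLimsup (𝔉 : Filter ι) fun i => ⋃ p ∈ S i, p.1 ×ˢ p.2) := by
  set K := fun i => ⋃ p ∈ S i, p.1 ×ˢ p.2
  rw [isPreconnected_iff_subset_of_fully_disjoint_closed isClosed_kuratowskiLimsup]
  intro u v hu hv huv hdisj
  obtain ⟨A, B, hA, hB, huA, hvB, hAB⟩ := normal_separation hu hv hdisj
  obtain ⟨O, hO, hABO, hKO⟩ := exists_isOpen_superset_eventually_disjoint (l := 𝔉) (K := K)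
    (hA.union hB).isClosed_compl.isCompact
    (Set.disjoint_left.2 fun z hz hzZ => hz (union_subset_union huA hvB (huv hzZ)))
  obtain ⟨W, hW, hWprod⟩ := exists_isOpenCover_prod_subset (O := {A, B, O})
    ⟨by simp [hA, hB, hO], fun z => by
      by_cases hz : z ∈ A ∪ B
      · rcases hz with hz | hz
        exacts [⟨A, by simp, hz⟩, ⟨B, by simp, hz⟩]
      · exact ⟨O, by simp, hABO hz⟩⟩
  have hside : ∀ᶠ i in (𝔉 : Filter ι), K i ⊆ A ∨ K i ⊆ B := by
    filter_upwards [hS W hW, hKO] with i hi hiO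
    refine hi.chainConnected.biUnion_subset_or hAB fun p hp => ?_
    obtain ⟨w, hw, hpw⟩ := hi.fst_refines p hp
    obtain ⟨w', hw', hpw'⟩ := hi.snd_refines p hp
    obtain ⟨o, ho, hwo⟩ := hWprod w hw w' hw'
    have hpo := (Set.prod_mono hpw hpw').trans hwo
    simp only [Finset.mem_insert, Finset.mem_singleton] at ho
    rcases ho with rfl | rfl | rfl
    · exact .inl hpo
    · exact .inr hpo
    · exact .inl fun z hz => (Set.disjoint_left.1 hiO (mem_biUnion hp hz) (hpo hz)).elim
  have hlim : ∀ {A' B' u' v' : Set (X × X)}, IsOpen B' → Disjoint A' B' → v' ⊆ B' →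
      kuratowskiLimsup 𝔉 K ⊆ u' ∪ v' → (∀ᶠ i in (𝔉 : Filter ι), K i ⊆ A') →
      kuratowskiLimsup 𝔉 K ⊆ u' := by
    intro A' B' u' v' hB' hAB' hvB' huv' hA' z hz
    refine (huv' hz).resolve_right fun hzv => ?_
    exact Set.disjoint_left.1 (hAB'.closure_left hB') (kuratowskiLimsup_subset_closure hA' hz)
      (hvB' hzv)
  rcases Ultrafilter.eventually_or.1 hside with h | h
  · exact .inl (hlim hB hAB hvB huv h)
  · exact .inr (hlim hA hAB.symm huA (union_comm u v ▸ huv) h)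

/-- The subcontinuum is the Kuratowski limit of the patterns along an ultrafilter finer than the
filter of ever finer covers. -/
theorem exists_subcontinuum_of_forall_isSpanPattern [CompactSpace X] [T2Space X] [Nonempty X]
    {U₀ : Finset (Set X)} (hU₀ : IsOpenCover U₀)
    (H : ∀ N, IsOpenCover N → ∃ S, IsSpanPattern U₀ N S) :
    ∃ Z : Set (X × X), IsClosed Z ∧ IsConnected Z ∧ Prod.fst '' Z = univ ∧
      Prod.snd '' Z = univ ∧ ∀ x, (x, x) ∉ Z := by
  choose S hS using fun N : OpenCover X => H N.1 N.2
  set 𝔉 := Ultrafilter.of (atTop : Filter (OpenCover X))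
  have hfine : ∀ W, IsOpenCover W → ∀ᶠ N in (𝔉 : Filter (OpenCover X)), IsSpanPattern U₀ W (S N) :=
    fun W hW => ((eventually_ge_atTop ⟨W, hW⟩).filter_mono (Ultrafilter.of_le _)).mono
      fun N hN => (hS N).mono (.refl U₀) hN
  set K := fun N => ⋃ p ∈ S N, p.1 ×ˢ p.2
  have hproj : ∀ π : X × X → X, Continuous π → (∀ N x, ∃ z ∈ K N, π z = x) →
      π '' kuratowskiLimsup 𝔉 K = univ := by
    refine fun π hπ h => eq_univ_of_forall fun x => ?_
    obtain ⟨z, hzx, hz⟩ := exists_mem_kuratowskiLimsup (l := 𝔉) (isClosed_singleton.preimage hπ)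
      fun N => let ⟨z, hz, hzx⟩ := h N x; ⟨z, hz, hzx⟩
    exact ⟨z, hz, hzx⟩
  have hfst := hproj Prod.fst continuous_fst fun N x =>
    let ⟨y, p, hp, hxy⟩ := (hS N).exists_fst x; ⟨(x, y), mem_biUnion hp hxy, rfl⟩
  have hsnd := hproj Prod.snd continuous_snd fun N y =>
    let ⟨x, p, hp, hxy⟩ := (hS N).exists_snd y; ⟨(x, y), mem_biUnion hp hxy, rfl⟩
  set D := ⋃ w ∈ U₀, w ×ˢ w
  have hD : IsOpen D := isOpen_biUnion fun w hw => (hU₀.isOpen w hw).prod (hU₀.isOpen w hw)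
  have hdiag : kuratowskiLimsup 𝔉 K ⊆ Dᶜ := by
    rw [← hD.isClosed_compl.closure_eq]
    exact kuratowskiLimsup_subset_closure (Eventually.of_forall fun N => iUnion₂_subset fun p hp =>
      subset_compl_iff_disjoint_right.2 (disjoint_iUnion₂_right.2 ((hS N).disjoint p hp)))
  refine ⟨kuratowskiLimsup 𝔉 K, isClosed_kuratowskiLimsup,
    ⟨image_nonempty.1 (hfst ▸ univ_nonempty), isPreconnected_kuratowskiLimsup 𝔉 hfine⟩, hfst, hsnd,
    fun x hx => hdiag hx ?_⟩
  obtain ⟨w, hw, hxw⟩ := hU₀.covers x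
  exact mem_biUnion hw ⟨hxw, hxw⟩

theorem surjectiveSpanZero_iff [CompactSpace X] [T2Space X] [Nonempty X] :
    SurjectiveSpanZero X ↔
      ∀ U₀ : Finset (Set X), IsOpenCover U₀ → ∃ N, IsOpenCover N ∧ IsPatternFree U₀ N := by
  refine ⟨fun h U₀ hU₀ => ?_, fun h Z hZ hZc hfst hsnd => ?_⟩
  · by_contra! hU₀N
    obtain ⟨Z, hZ, hZc, hfst, hsnd, hdiag⟩ := exists_subcontinuum_of_forall_isSpanPattern hU₀
      fun N hN => by simpa [IsPatternFree] using hU₀N N hN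
    obtain ⟨x, hx⟩ := h Z hZ hZc hfst hsnd
    exact hdiag x hx
  · by_contra! hdiag
    obtain ⟨U₀, hU₀, hS⟩ :=
      exists_isSpanPattern_of_subcontinuum hZ hZc.isPreconnected hfst hsnd hdiag
    obtain ⟨N, hN, hfree⟩ := h U₀ hU₀
    obtain ⟨S, hS⟩ := hS N hN
    exact hfree S hS

def HasChainRefinement (U : Finset (Set X)) : Prop :=
  ∃ (n : ℕ) (V : Fin n → Set X), (∀ i, IsOpen (V i)) ∧ (⋃ i, V i) = univ ∧
    (∀ i, ∃ u ∈ U, V i ⊆ u) ∧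
    ∀ i j : Fin n, (V i ∩ V j).Nonempty ↔ |((i : ℕ) : ℤ) - ((j : ℕ) : ℤ)| ≤ 1

theorem chainable_iff :
    Chainable X ↔ ∀ U : Finset (Set X), IsOpenCover U → HasChainRefinement U := by
  simp only [Chainable, isOpenCover_iff_sUnion_eq, and_imp]
  rfl

theorem HasChainRefinement.mono {U U' : Finset (Set X)} (h : HasChainRefinement U)
    (hU : Refines U U') : HasChainRefinement U' :=
  let ⟨n, V, hVo, hVcov, hVU, hchain⟩ := h
  ⟨n, V, hVo, hVcov, fun i =>
    let ⟨u, hu, hVu⟩ := hVU i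
    let ⟨u', hu', huu'⟩ := hU u hu
    ⟨u', hu', hVu.trans huu'⟩, hchain⟩

theorem HasChainRefinement.pullback {f : X → Y} (hf : Continuous f) (hsurj : Function.Surjective f)
    {U : Finset (Set Y)} (h : HasChainRefinement U) : HasChainRefinement (pullback f U) := by
  obtain ⟨n, V, hVo, hVcov, hVU, hchain⟩ := h
  refine ⟨n, fun i => f ⁻¹' V i, fun i => (hVo i).preimage hf,
    by rw [← preimage_iUnion, hVcov, preimage_univ], fun i => ?_, fun i j => ?_⟩
  · obtain ⟨u, hu, hVu⟩ := hVU i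
    exact ⟨f ⁻¹' u, Finset.mem_image_of_mem _ hu, preimage_mono hVu⟩
  · rw [← preimage_inter, hsurj.nonempty_preimage, hchain]

theorem IsOpenCover.exists_cozero_refinement [CompactSpace X] [T2Space X] {W : Finset (Set X)}
    (hW : IsOpenCover W) : ∃ (k : ℕ) (φ : ℕ → C(X, ℝ)),
      (∀ j < k, ∃ w ∈ W, {x | 0 < φ j x} ⊆ w) ∧ ∀ x, ∃ j < k, 0 < φ j x := by
  set e := W.equivFin.symm
  obtain ⟨ρ, hρ⟩ := PartitionOfUnity.exists_isSubordinate isClosed_univ (fun i => (e i : Set X))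
    (fun i => hW.isOpen _ (e i).2) fun x _ =>
      let ⟨w, hw, hxw⟩ := hW.covers x
      mem_iUnion.2 ⟨e.symm ⟨w, hw⟩, by simpa using hxw⟩
  refine ⟨W.card, fun j => if h : j < W.card then ρ ⟨j, h⟩ else 0,
    fun j hj => ⟨e ⟨j, hj⟩, (e _).2, fun x hx => hρ _ (subset_tsupport _ ?_)⟩, fun x => ?_⟩
  · simp only [dif_pos hj, mem_ofPred_eq] at hx
    exact hx.ne'
  · obtain ⟨i, hi⟩ := ρ.exists_pos (mem_univ x)
    exact ⟨i, i.2, by simpa [dif_pos i.2] using hi⟩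

def boxSet {α : Type*} (g : ℕ → α → ℝ) (b : List (ℕ × ℚ × ℚ)) : Set α :=
  {a | ∀ c ∈ b, g c.1 a ∈ Ioo (c.2.1 : ℝ) c.2.2}

def boxCover {α : Type*} (g : ℕ → α → ℝ) (B : List (List (ℕ × ℚ × ℚ))) : Finset (Set α) :=
  B.toFinset.image (boxSet g)

theorem isOpen_boxSet {g : ℕ → X → ℝ} (hg : ∀ n, Continuous (g n)) (b : List (ℕ × ℚ × ℚ)) :
    IsOpen (boxSet g b) := by
  have : boxSet g b = ⋂ c ∈ {c | c ∈ b}, g c.1 ⁻¹' Ioo (c.2.1 : ℝ) c.2.2 := by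
    ext
    simp [boxSet]
  rw [this]
  exact b.finite_toSet.isOpen_biInter fun c _ => isOpen_Ioo.preimage (hg c.1)

theorem boxSet_congr {α : Type*} {g g' : ℕ → α → ℝ} {b : List (ℕ × ℚ × ℚ)}
    (h : ∀ c ∈ b, g c.1 = g' c.1) : boxSet g b = boxSet g' b := by
  ext a
  exact forall₂_congr fun c hc => by rw [h c hc]

theorem exists_mem_boxSet_subset {O : Set (ℕ → ℝ)} (hO : IsOpen O) {y : ℕ → ℝ} (hy : y ∈ O) :
    ∃ b, y ∈ boxSet (fun n y => y n) b ∧ boxSet (fun n y => y n) b ⊆ O := by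
  obtain ⟨I, u, hu, hIu⟩ := isOpen_pi_iff.1 hO y hy
  have hrat : ∀ i ∈ I, ∃ q r : ℚ, y i ∈ Ioo (q : ℝ) r ∧ Ioo (q : ℝ) r ⊆ u i := by
    intro i hi
    obtain ⟨_, hv, hyv, hvu⟩ :=
      Real.isTopologicalBasis_Ioo_rat.exists_subset_of_mem_open (hu i hi).2 (hu i hi).1
    simp only [mem_iUnion, mem_singleton_iff] at hv
    obtain ⟨q, r, -, rfl⟩ := hv
    exact ⟨q, r, hyv, hvu⟩
  choose! q r hyqr hqru using hrat
  refine ⟨I.toList.map fun i => (i, q i, r i), fun c hc => ?_, fun z hz => hIu fun i hi =>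
    hqru i hi (hz _ (List.mem_map_of_mem (Finset.mem_toList.2 hi)))⟩
  obtain ⟨i, hi, rfl⟩ := List.mem_map.1 hc
  exact hyqr i (Finset.mem_toList.1 hi)

theorem exists_boxCover_refines {Y : Set (ℕ → ℝ)} [CompactSpace Y] {U : Finset (Set Y)}
    (hU : IsOpenCover U) : ∃ B, IsOpenCover (boxCover (fun n (y : Y) => (y : ℕ → ℝ) n) B) ∧
      Refines (boxCover (fun n (y : Y) => (y : ℕ → ℝ) n) B) U := by
  obtain ⟨I, hI, hIU⟩ := exists_finset_isOpenCover_image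
    (isOpen_boxSet fun n => (continuous_apply n).comp continuous_subtype_val)
    (P := fun b => ∃ u ∈ U, boxSet (fun n (y : Y) => (y : ℕ → ℝ) n) b ⊆ u) fun y => by
      obtain ⟨u, hu, hyu⟩ := hU.covers y
      obtain ⟨O, hO, rfl⟩ := isOpen_induced_iff.1 (hU.isOpen u hu)
      obtain ⟨b, hyb, hbO⟩ := exists_mem_boxSet_subset hO hyu
      exact ⟨b, hyb, _, hu, preimage_mono hbO⟩
  refine ⟨I.toList, by rwa [boxCover, Finset.toList_toFinset], ?_⟩
  simp only [Refines, boxCover, Finset.toList_toFinset, Finset.mem_image]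
  rintro _ ⟨b, hb, rfl⟩
  exact hIU b hb

/-- The `n`-th function reads `n.unpair.1` as a code `(B, j)` and is the `j`-th function of `ψ` at
the cover cut out by the boxes `B` in the functions with smaller index (coordinates `m ≥ n` in `B`
are read as the junk value `0`). -/
def reflectingSeq (ψ : Finset (Set X) → ℕ → C(X, ℝ)) (n : ℕ) : C(X, ℝ) :=
  let code := (Denumerable.eqv (List (List (ℕ × ℚ × ℚ)) × ℕ)).symm n.unpair.1
  ψ (boxCover (fun m x => if _ : m < n then reflectingSeq ψ m x else 0) code.1) code.2
termination_by n

theorem reflectingSeq_pair (ψ : Finset (Set X) → ℕ → C(X, ℝ)) {B : List (List (ℕ × ℚ × ℚ))}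
    {M : ℕ} (hM : ∀ b ∈ B, ∀ c ∈ b, c.1 < M) (j : ℕ) :
    reflectingSeq ψ (Nat.pair (Denumerable.eqv _ (B, j)) M) =
      ψ (boxCover (fun m x => reflectingSeq ψ m x) B) j := by
  rw [reflectingSeq]
  simp only [Nat.unpair_pair, Equiv.symm_apply_apply]
  congr 1
  refine Finset.image_congr fun b hb => boxSet_congr fun c hc => funext fun x => ?_
  rw [dif_pos ((hM b (List.mem_toFinset.1 hb) c hc).trans_le (Nat.right_le_pair _ _))]

theorem exists_metrizable_image [CompactSpace X] [T2Space X] (T : Finset (Set X) → Finset (Set X))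
    (hT : ∀ W, IsOpenCover W → IsOpenCover (T W)) :
    ∃ (Y : Type) (_ : TopologicalSpace Y) (g : X → Y), TopologicalSpace.MetrizableSpace Y ∧
      Continuous g ∧ Function.Surjective g ∧ ∀ U : Finset (Set Y), IsOpenCover U →
        ∃ B, IsOpenCover B ∧ Refines B U ∧
          ∃ O, IsOpenCover O ∧ Refines (pullback g O) (T (pullback g B)) := by
  choose! k φ hφ hφcov using fun W (hW : IsOpenCover W) => (hT W hW).exists_cozero_refinement
  set G := reflectingSeq φ
  set f : X → ℕ → ℝ := fun x n => G n x
  have hf : Continuous f := continuous_pi fun n => (G n).continuous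
  have : CompactSpace (range f) := isCompact_iff_compactSpace.1 (isCompact_range hf)
  refine ⟨range f, inferInstance, rangeFactorization f, inferInstance, hf.rangeFactorization,
    rangeFactorization_surjective, fun U hU => ?_⟩
  obtain ⟨B, hB, hBU⟩ := exists_boxCover_refines hU
  have hpull : pullback (rangeFactorization f) (boxCover (fun n (y : range f) => (y : ℕ → ℝ) n) B)
      = boxCover (fun n x => G n x) B := by
    simp only [pullback, boxCover, Finset.image_image]
    rfl
  set W := boxCover (fun n x => G n x) B
  have hW : IsOpenCover W := hpull ▸ hB.pullback hf.rangeFactorization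
  obtain ⟨M, hM⟩ := Finset.exists_nat_subset_range (B.flatten.map Prod.fst).toFinset
  have hGφ : ∀ j, G (Nat.pair (Denumerable.eqv _ (B, j)) M) = φ W j :=
    reflectingSeq_pair _ fun b hb c hc => Finset.mem_range.1 <|
      hM (List.mem_toFinset.2 (List.mem_map_of_mem (List.mem_flatten.2 ⟨b, hb, hc⟩)))
  refine ⟨_, hB, hBU, (Finset.range (k W)).image fun j =>
    {y : range f | 0 < (y : ℕ → ℝ) (Nat.pair (Denumerable.eqv _ (B, j)) M)}, ⟨?_, ?_⟩, ?_⟩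
  · simp only [Finset.mem_image]
    rintro _ ⟨j, -, rfl⟩
    exact isOpen_lt continuous_const ((continuous_apply _).comp continuous_subtype_val)
  · rintro ⟨_, x, rfl⟩
    obtain ⟨j, hj, hx⟩ := hφcov _ hW x
    exact ⟨_, Finset.mem_image_of_mem _ (Finset.mem_range.2 hj), show 0 < G _ x by rwa [hGφ]⟩
  · rw [hpull]
    simp only [Refines, pullback, Finset.image_image, Finset.mem_image, Finset.mem_range]
    rintro _ ⟨j, hj, rfl⟩
    obtain ⟨w, hw, hjw⟩ := hφ _ hW j hj
    exact ⟨w, hw, fun x hx => hjw (show 0 < φ W j x by rw [← hGφ]; exact hx)⟩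

end SpanZero

end

open SpanZero

theorem nonmetric_to_metric_counterexample_10 :
    (∃ (X : Type u) (_ : TopologicalSpace X),
      CompactSpace X ∧ T2Space X ∧ ConnectedSpace X ∧ SurjectiveSpanZero X ∧ ¬ Chainable X) →
    ∃ (Y : Type) (_ : TopologicalSpace Y),
      TopologicalSpace.MetrizableSpace Y ∧
      CompactSpace Y ∧ T2Space Y ∧ ConnectedSpace Y ∧ SurjectiveSpanZero Y ∧ ¬ Chainable Y := by
  rintro ⟨X, _, _, _, _, hX, hXchain⟩
  obtain ⟨U, hU, hUchain⟩ : ∃ U, IsOpenCover U ∧ ¬HasChainRefinement U := by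
    simpa [chainable_iff] using hXchain
  choose! N hN hNfree using surjectiveSpanZero_iff.1 hX
  obtain ⟨Y, _, g, _, hg, hgs, hrefl⟩ :=
    exists_metrizable_image (fun W => N W ⊼ U) fun W hW => (hN W hW).infs hU
  have : CompactSpace Y := hgs.compactSpace hg
  have : ConnectedSpace Y := hgs.connectedSpace hg
  have : Nonempty Y := Nonempty.map g inferInstance
  refine ⟨Y, ‹_›, ‹_›, ‹_›, inferInstance, ‹_›, surjectiveSpanZero_iff.2 fun U₀ hU₀ => ?_, ?_⟩
  · obtain ⟨B, hB, hBU₀, O, hO, hOB⟩ := hrefl U₀ hU₀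
    exact ⟨O, hO, (((hNfree _ (hB.pullback hg)).mono (.refl _)
      (hOB.trans (infs_refines_left _ _))).of_pullback hgs).mono hBU₀ (.refl O)⟩
  · rw [chainable_iff]
    intro hYchain
    obtain ⟨_, -, -, O, hO, hOU⟩ := hrefl {univ} isOpenCover_singleton_univ
    exact hUchain (((hYchain O hO).pullback hg hgs).mono (hOU.trans (infs_refines_right _ _)))
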